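/- Let w : ℂ → ℝ be smooth (ContDiff ℝ ⊤), regarded as ℂ-valued via coercion, and let φ : ℂ → ℂ be smooth (ContDiff ℝ ⊤) satisfying ∂̄φ(z) = (Complex.I/2)·z·e^{w(z)} for all z ∈ ℂ. Then for every z ∈ ℂ: ∂̄(ζ ↦ 4·e^{−w(ζ)}·∂(∂̄φ)(ζ))(z) = 2·Complex.I·z·∂(∂̄ w)(z). (This is the identity ∂̄ Δ_g φ_g = −2·ι_{v^{1,0}} ρ_g for the conformal metric g = e^w|dz|² on ℂ, its Ricci form ρ_g = −i∂∂̄w·dz∧dz̄, the holomorphy potential φ of the radial holomorphic vector field v^{1,0} = z∂_z, and Δ_g = 4e^{−w}∂∂̄.) -/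

import Mathlib

/-- The Wirtinger derivative `∂u`. -/
noncomputable def wdz (u : ℂ → ℂ) (z : ℂ) : ℂ :=
  (1 / 2) * (fderiv ℝ u z 1 - Complex.I • fderiv ℝ u z Complex.I)

/-- The Wirtinger derivative `∂̄u`. -/
noncomputable def wdzbar (u : ℂ → ℂ) (z : ℂ) : ℂ :=
  (1 / 2) * (fderiv ℝ u z 1 + Complex.I • fderiv ℝ u z Complex.I)

lemma wdz_mul (f g : ℂ → ℂ) (z : ℂ) (hf : DifferentiableAt ℝ f z)
    (hg : DifferentiableAt ℝ g z) :
    wdz (fun x => f x * g x) z = wdz f z * g z + f z * wdz g z := by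
  unfold wdz
  rw [fderiv_fun_mul hf hg]
  simp [smul_eq_mul]
  ring

lemma wdzbar_mul (f g : ℂ → ℂ) (z : ℂ) (hf : DifferentiableAt ℝ f z)
    (hg : DifferentiableAt ℝ g z) :
    wdzbar (fun x => f x * g x) z = wdzbar f z * g z + f z * wdzbar g z := by
  unfold wdzbar
  rw [fderiv_fun_mul hf hg]
  simp [smul_eq_mul]
  ring

lemma wdz_const_mul (c : ℂ) (f : ℂ → ℂ) (z : ℂ) (hf : DifferentiableAt ℝ f z) :
    wdz (fun x => c * f x) z = c * wdz f z := by
  unfold wdz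
  rw [fderiv_const_mul hf]
  simp [smul_eq_mul]
  ring

lemma wdzbar_const_mul (c : ℂ) (f : ℂ → ℂ) (z : ℂ) (hf : DifferentiableAt ℝ f z) :
    wdzbar (fun x => c * f x) z = c * wdzbar f z := by
  unfold wdzbar
  rw [fderiv_const_mul hf]
  simp [smul_eq_mul]
  ring

lemma wdz_id (z : ℂ) : wdz (fun x => x) z = 1 := by
  unfold wdz
  simp [fderiv_id', smul_eq_mul, Complex.I_mul_I]
  ring

lemma wdzbar_id (z : ℂ) : wdzbar (fun x => x) z = 0 := by
  unfold wdzbar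
  simp [fderiv_id', smul_eq_mul, Complex.I_mul_I]

lemma wdzbar_const_add (c : ℂ) (f : ℂ → ℂ) (z : ℂ) :
    wdzbar (fun x => c + f x) z = wdzbar f z := by
  unfold wdzbar
  rw [fderiv_const_add c]

lemma wdz_cexp (f : ℂ → ℂ) (z : ℂ) (hf : DifferentiableAt ℝ f z) :
    wdz (fun x => Complex.exp (f x)) z = Complex.exp (f z) * wdz f z := by
  unfold wdz
  rw [(hf.hasFDerivAt.cexp).fderiv]
  simp [smul_eq_mul]
  ring

theorem dbar_laplacian_potential (w : ℂ → ℝ) (hw : ContDiff ℝ (⊤ : ℕ∞) w)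
    (φ : ℂ → ℂ) (hφ : ContDiff ℝ (⊤ : ℕ∞) φ)
    (hpot : ∀ z : ℂ, wdzbar φ z = (Complex.I / 2) * z * ((Real.exp (w z) : ℝ) : ℂ)) (z : ℂ) :
    wdzbar (fun ζ : ℂ => 4 * ((Real.exp (-(w ζ)) : ℝ) : ℂ) * wdz (fun x : ℂ => wdzbar φ x) ζ) z
      = 2 * Complex.I * z * wdz (fun x : ℂ => wdzbar (fun v : ℂ => ((w v : ℝ) : ℂ)) x) z := by
  set W : ℂ → ℂ := fun ζ => ((w ζ : ℝ) : ℂ) with hWdef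
  have hW : ContDiff ℝ (⊤ : ℕ∞) W := Complex.ofRealCLM.contDiff.comp hw
  have hWd : Differentiable ℝ W := hW.differentiable (by simp)
  have hD : ContDiff ℝ 1 (fderiv ℝ W) := hW.fderiv_right (WithTop.coe_le_coe.mpr le_top)
  have hDd : Differentiable ℝ (fderiv ℝ W) := hD.differentiable one_ne_zero
  have happ : ∀ v : ℂ, Differentiable ℝ (fun ζ => fderiv ℝ W ζ v) :=
    fun v => hDd.clm_apply (differentiable_const v)
  have hsymm : ∀ u v : ℂ, fderiv ℝ (fderiv ℝ W) z u v = fderiv ℝ (fderiv ℝ W) z v u :=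
    fun u v => (hW.contDiffAt.isSymmSndFDerivAt (by exact by rw [minSmoothness_of_isRCLikeNormedField]; exact WithTop.coe_le_coe.mpr le_top)) u v
  have hfd : ∀ v : ℂ, fderiv ℝ (fun ζ => fderiv ℝ W ζ v) z
      = (fderiv ℝ (fderiv ℝ W) z).flip v := by
    intro v
    rw [fderiv_clm_apply (hDd z) (differentiableAt_const v)]
    simp
  -- rewrite wdz W and wdzbar W without smul
  have hrw : (fun ζ => wdz W ζ) = fun ζ : ℂ =>
      (1/2 : ℂ) * (fderiv ℝ W ζ) 1 - (Complex.I/2) * (fderiv ℝ W ζ) Complex.I := by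
    funext ζ; unfold wdz; rw [smul_eq_mul]; ring
  have hrwb : (fun ζ => wdzbar W ζ) = fun ζ : ℂ =>
      (1/2 : ℂ) * (fderiv ℝ W ζ) 1 + (Complex.I/2) * (fderiv ℝ W ζ) Complex.I := by
    funext ζ; unfold wdzbar; rw [smul_eq_mul]; ring
  have hwdzW : Differentiable ℝ (fun ζ => wdz W ζ) := by
    rw [hrw]
    exact ((happ 1).const_mul _).sub ((happ Complex.I).const_mul _)
  have key : ∀ v : ℂ, fderiv ℝ (fun ζ => wdz W ζ) z v
      = (1/2 : ℂ) * fderiv ℝ (fderiv ℝ W) z v 1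
        - (Complex.I/2) * fderiv ℝ (fderiv ℝ W) z v Complex.I := by
    intro v
    rw [hrw, fderiv_fun_sub (((happ 1).const_mul _) z) (((happ Complex.I).const_mul _) z),
      fderiv_const_mul ((happ 1) z), fderiv_const_mul ((happ Complex.I) z)]
    simp [hfd]
  have keyb : ∀ v : ℂ, fderiv ℝ (fun ζ => wdzbar W ζ) z v
      = (1/2 : ℂ) * fderiv ℝ (fderiv ℝ W) z v 1
        + (Complex.I/2) * fderiv ℝ (fderiv ℝ W) z v Complex.I := by
    intro v
    rw [hrwb, fderiv_fun_add (((happ 1).const_mul _) z) (((happ Complex.I).const_mul _) z),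
      fderiv_const_mul ((happ 1) z), fderiv_const_mul ((happ Complex.I) z)]
    simp [hfd]
  -- commutation of the mixed Wirtinger derivatives
  have hcomm : wdzbar (fun ζ => wdz W ζ) z = wdz (fun ζ => wdzbar W ζ) z := by
    unfold wdzbar wdz
    rw [smul_eq_mul, smul_eq_mul]
    show (1/2 : ℂ) * (fderiv ℝ (fun ζ => wdz W ζ) z 1
        + Complex.I * fderiv ℝ (fun ζ => wdz W ζ) z Complex.I)
      = (1/2 : ℂ) * (fderiv ℝ (fun ζ => wdzbar W ζ) z 1
        - Complex.I * fderiv ℝ (fun ζ => wdzbar W ζ) z Complex.I)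
    rw [key 1, key Complex.I, keyb 1, keyb Complex.I]
    linear_combination (-(Complex.I) / 2) * hsymm 1 Complex.I
  -- Step 1: rewrite wdzbar φ
  have h1 : (fun x : ℂ => wdzbar φ x) = fun x : ℂ => (Complex.I / 2) * (x * Complex.exp (W x)) := by
    funext x
    rw [hpot x]
    push_cast
    ring
  have hdexp : ∀ ζ : ℂ, DifferentiableAt ℝ (fun x => Complex.exp (W x)) ζ :=
    fun ζ => (hWd ζ).cexp
  have h2 : ∀ ζ : ℂ, wdz (fun x : ℂ => wdzbar φ x) ζ
      = (Complex.I / 2) * (Complex.exp (W ζ) + ζ * (Complex.exp (W ζ) * wdz W ζ)) := by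
    intro ζ
    rw [h1, wdz_const_mul _ _ _ ((differentiableAt_fun_id.fun_mul (hdexp ζ))),
      wdz_mul _ _ _ differentiableAt_fun_id (hdexp ζ), wdz_id, wdz_cexp _ _ (hWd ζ)]
    ring
  -- Step 3: the outer function simplifies
  have h3 : (fun ζ : ℂ => 4 * ((Real.exp (-(w ζ)) : ℝ) : ℂ) * wdz (fun x : ℂ => wdzbar φ x) ζ)
      = fun ζ : ℂ => 2 * Complex.I + 2 * Complex.I * (ζ * wdz W ζ) := by
    funext ζ
    rw [h2 ζ]
    have he : ((Real.exp (-(w ζ)) : ℝ) : ℂ) = Complex.exp (-(W ζ)) := by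
      push_cast; rfl
    have hne : Complex.exp (-(W ζ)) * Complex.exp (W ζ) = 1 := by
      rw [← Complex.exp_add]; simp
    rw [he]
    linear_combination (2 * Complex.I + 2 * Complex.I * (ζ * wdz W ζ)) * hne
  rw [h3, wdzbar_const_add, wdzbar_const_mul _ _ _ (differentiableAt_fun_id.fun_mul (hwdzW z)),
    wdzbar_mul _ _ _ differentiableAt_fun_id (hwdzW z), wdzbar_id, hcomm]
  ring
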